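/- arXiv:1907.06459 — 2 statements merged into one kernel-verified Lean document; each statement's English description precedes it below -/
import Mathlib

section
/- Let Λ₁ ⊂ Λ₂ be finite subgraphs of a finite graph G such that ∂_v Λ₁ and ∂_v Λ₂ are disjoint, let β ∈ (0,∞) and fix a field realization η. Then the ratio of extended partition functions with mixed boundary conditions satisfies (Z̄^{+,−} · Z̄^{−,+}) / (Z̄^{+,+} · Z̄^{−,−}) = ⟨ 1[∂_v Λ₁ is NOT connected to ∂_v Λ₂ through the disagreement set D] ⟩^{∂_v Λ₁ ∪ ∂_v Λ₂, +/−}, where Z̄^{s₁,s₂} is the extended partition function with vertex spins constrained to the constant value s₁ on ∂_v Λ₂ and s₂ on ∂_v Λ₁, and the expectation is under the product of the extended measures conditioned to be all-plus on ∂_v Λ₁ ∪ ∂_v Λ₂ and all-minus on ∂_v Λ₁ ∪ ∂_v Λ₂ respectively. -/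
/-!
Swapping the two extended configurations on the disagreement cluster of `∂_v Λ₁` (the points
joined to `∂_v Λ₁` by a path inside the disagreement set `D`) is an involution on pairs: it
leaves `D` unchanged, and since the cluster is closed in `D`, every edge weight `W(σ_v, κ_e)`
meets the swap either on both ends or on a point where the two configurations agree, so the
product weight is unchanged as well.

On a pair of nonzero weight the vertex spin `σ` is constant along paths in `D`: a disagreeing
midpoint carries a nonzero value in one of the two configurations, and that value fixes the
spin of both disagreeing endpoints. Under the mixed boundary conditions `σ` is `-` on `∂_v Λ₁`
and `+` on `∂_v Λ₂`, so the cluster contains `∂_v Λ₁` and misses `∂_v Λ₂`, and the swap turns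
the mixed conditions into the plus/minus ones with `∂_v Λ₁` and `∂_v Λ₂` still separated. The
same reasoning read backwards inverts it, so `Z̄^{+,-} Z̄^{-,+}` is the plus/minus product weight
summed over the separated pairs.
-/

open MeasureTheory ProbabilityTheory Real BigOperators
open scoped Classical

noncomputable section
namespace RFIM

/-- The two-point spin space `{-1,+1} ⊂ ℤ`. -/
abbrev Spin : Type := ({-1, 1} : Finset ℤ)
/-- The mid-edge value space `{-1,0,+1} ⊂ ℤ`. -/
abbrev Mid : Type := ({-1, 0, 1} : Finset ℤ)

/-- The real value of a spin. -/
def spinR (s : Spin) : ℝ := ((s : ℤ) : ℝ)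

/-- The `+1` spin. -/
def pl : Spin := ⟨1, by decide⟩
/-- The `-1` spin. -/
def mn : Spin := ⟨-1, by decide⟩

section GeneralGraph

variable {V : Type} [Fintype V] [DecidableEq V]

/-- Energy `J σ_u σ_v` carried by an (unordered) edge. -/
def edgeE (J : ℝ) (σ : V → Spin) : Sym2 V → ℝ :=
  Sym2.lift ⟨fun u v => J * spinR (σ u) * spinR (σ v), fun _ _ => by ring⟩

/-- The RFIM Hamiltonian `H(σ) = -∑_{e} J σ_u σ_v - ∑_v (h + ε η_v) σ_v` on a finite graph. -/
def hamG (G : SimpleGraph V) [DecidableRel G.Adj] (J h ε : ℝ) (η : V → ℝ) (σ : V → Spin) : ℝ :=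
  - ∑ e ∈ G.edgeFinset, edgeE J σ e - ∑ v, (h + ε * η v) * spinR (σ v)

/-- Partition function restricted to configurations agreeing with `τ` on `A`. -/
def ZG (G : SimpleGraph V) [DecidableRel G.Adj] (J h ε β : ℝ) (η : V → ℝ)
    (A : Finset V) (τ : V → Spin) : ℝ :=
  ∑ σ : V → Spin,
    if ∀ v ∈ A, σ v = τ v then Real.exp (-(β * hamG G J h ε η σ)) else 0

/-- Thermal expectation of `f` under the Gibbs measure conditioned on `{σ = τ on A}`. -/
def thermalG (G : SimpleGraph V) [DecidableRel G.Adj] (J h ε β : ℝ) (η : V → ℝ)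
    (A : Finset V) (τ : V → Spin) (f : (V → Spin) → ℝ) : ℝ :=
  (∑ σ : V → Spin,
    if ∀ v ∈ A, σ v = τ v then f σ * Real.exp (-(β * hamG G J h ε η σ)) else 0) /
    ZG G J h ε β η A τ

/-- Partition function with spins constrained to the constant value `s₁` on `A₁`
and `s₂` on `A₂`. -/
def Z2G (G : SimpleGraph V) [DecidableRel G.Adj] (J h ε β : ℝ) (η : V → ℝ)
    (A₁ A₂ : Finset V) (s₁ s₂ : Spin) : ℝ :=
  ∑ σ : V → Spin,
    if (∀ v ∈ A₁, σ v = s₁) ∧ (∀ v ∈ A₂, σ v = s₂) then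
      Real.exp (-(β * hamG G J h ε η σ)) else 0

/-- Internal vertex boundary of `Λ` in the graph `G`. -/
def vbdryG (G : SimpleGraph V) [DecidableRel G.Adj] (Λ : Finset V) : Finset V :=
  Λ.filter fun v => ¬ G.neighborFinset v ⊆ Λ

/-- The surface tension `β⁻¹ log (Z^{++} Z^{--} / (Z^{+-} Z^{-+}))` between the internal
vertex boundaries of `Λ₁` and `Λ₂`. -/
def surfTG (G : SimpleGraph V) [DecidableRel G.Adj] (J h ε β : ℝ) (η : V → ℝ)
    (Λ₁ Λ₂ : Finset V) : ℝ :=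
  β⁻¹ * Real.log
    ((Z2G G J h ε β η (vbdryG G Λ₁) (vbdryG G Λ₂) pl pl *
      Z2G G J h ε β η (vbdryG G Λ₁) (vbdryG G Λ₂) mn mn) /
     (Z2G G J h ε β η (vbdryG G Λ₁) (vbdryG G Λ₂) pl mn *
      Z2G G J h ε β η (vbdryG G Λ₁) (vbdryG G Λ₂) mn pl))

end GeneralGraph
section ExtendedModel

variable {V : Type} [Fintype V] [DecidableEq V]

/-- `t = (e^{2Jβ} - 1)^{-1/2}`. -/
def tpar (J β : ℝ) : ℝ := (Real.sqrt (Real.exp (2 * J * β) - 1))⁻¹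
/-- `λ = (2 sinh (Jβ))^{1/2}`. -/
def lampar (J β : ℝ) : ℝ := Real.sqrt (2 * Real.sinh (J * β))

/-- The weight `W(a,b) = λ (δ_{a,b} + t δ_{b,0})`. -/
def Wgt (J β : ℝ) (a b : ℤ) : ℝ :=
  lampar J β * ((if a = b then 1 else 0) + tpar J β * (if b = 0 then 1 else 0))

/-- The product `W(σ_u, k) W(σ_v, k)` over the two endpoints of an edge. -/
def edgeW (J β : ℝ) (σ : V → Spin) (k : ℤ) : Sym2 V → ℝ :=
  Sym2.lift ⟨fun u v => Wgt J β (σ u : ℤ) k * Wgt J β (σ v : ℤ) k, fun _ _ => mul_comm _ _⟩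

/-- The weight of an extended configuration `(σ, κ)`:
`∏_{e ∈ E(G)} ∏_{v ∈ e} W(σ_v, κ_e) · e^{-β ∑_v (h + ε η_v) σ_v}`. -/
def extWeight (G : SimpleGraph V) [DecidableRel G.Adj] (J h ε β : ℝ) (η : V → ℝ)
    (σ : V → Spin) (κ : G.edgeFinset → Mid) : ℝ :=
  (∏ e : G.edgeFinset, edgeW J β σ (κ e : ℤ) (e : Sym2 V)) *
    Real.exp (-(β * ∑ v, (h + ε * η v) * spinR (σ v)))

/-- Extended partition function restricted to vertex configurations agreeing with `τ` on `A`. -/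
def extZ (G : SimpleGraph V) [DecidableRel G.Adj] (J h ε β : ℝ) (η : V → ℝ)
    (A : Finset V) (τ : V → Spin) : ℝ :=
  ∑ σ : V → Spin, ∑ κ : G.edgeFinset → Mid,
    if ∀ v ∈ A, σ v = τ v then extWeight G J h ε β η σ κ else 0

/-- Extended partition function with vertex spins constrained to the constant `s₁` on `A₁`
and `s₂` on `A₂`. -/
def extZ2 (G : SimpleGraph V) [DecidableRel G.Adj] (J h ε β : ℝ) (η : V → ℝ)
    (A₁ A₂ : Finset V) (s₁ s₂ : Spin) : ℝ :=
  ∑ σ : V → Spin, ∑ κ : G.edgeFinset → Mid,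
    if (∀ v ∈ A₁, σ v = s₁) ∧ (∀ v ∈ A₂, σ v = s₂) then extWeight G J h ε β η σ κ else 0

/-- Probability of the extended configuration `(σ,κ)` under the extended measure
conditioned on `{σ = τ on A}`. -/
def extProb (G : SimpleGraph V) [DecidableRel G.Adj] (J h ε β : ℝ) (η : V → ℝ)
    (A : Finset V) (τ : V → Spin) (σ : V → Spin) (κ : G.edgeFinset → Mid) : ℝ :=
  (if ∀ v ∈ A, σ v = τ v then extWeight G J h ε β η σ κ else 0) / extZ G J h ε β η A τ

/-- Expectation of `F` under the product of the extended measures conditioned on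
`{σ = τ on A}` and `{σ' = τ' on A}` respectively. -/
def extExp2 (G : SimpleGraph V) [DecidableRel G.Adj] (J h ε β : ℝ) (η : V → ℝ)
    (A : Finset V) (τ τ' : V → Spin)
    (F : (V → Spin) → (G.edgeFinset → Mid) → (V → Spin) → (G.edgeFinset → Mid) → ℝ) : ℝ :=
  (∑ σ : V → Spin, ∑ κ : G.edgeFinset → Mid, ∑ σ' : V → Spin, ∑ κ' : G.edgeFinset → Mid,
      if (∀ v ∈ A, σ v = τ v) ∧ (∀ v ∈ A, σ' v = τ' v) then
        F σ κ σ' κ' * extWeight G J h ε β η σ κ * extWeight G J h ε β η σ' κ' else 0) /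
    (extZ G J h ε β η A τ * extZ G J h ε β η A τ')

/-- The extended graph: vertices of `G` together with one midpoint per edge, each midpoint
joined to the two endpoints of its edge. -/
def extGraph (G : SimpleGraph V) [DecidableRel G.Adj] :
    SimpleGraph (V ⊕ G.edgeFinset) where
  Adj x y :=
    match x, y with
    | Sum.inl v, Sum.inr e => v ∈ (e : Sym2 V)
    | Sum.inr e, Sum.inl v => v ∈ (e : Sym2 V)
    | _, _ => False
  symm := ⟨by
    rintro (v | e) (w | f) h
    · exact h.elim
    · exact h
    · exact h
    · exact h.elim⟩
  loopless := ⟨by rintro (v | e) h <;> exact h.elim⟩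

/-- The values of an extended configuration on the extended vertex set. -/
def extConf {G : SimpleGraph V} [DecidableRel G.Adj]
    (σ : V → Spin) (κ : G.edgeFinset → Mid) : V ⊕ G.edgeFinset → ℤ :=
  fun z => match z with
  | Sum.inl v => (σ v : ℤ)
  | Sum.inr e => (κ e : ℤ)

/-- The disagreement set of a pair of extended configurations. -/
def DisSet {G : SimpleGraph V} [DecidableRel G.Adj]
    (σ : V → Spin) (κ : G.edgeFinset → Mid) (σ' : V → Spin) (κ' : G.edgeFinset → Mid) :
    Set (V ⊕ G.edgeFinset) :=
  {z | extConf σ κ z ≠ extConf σ' κ' z}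

/-- `x` and `y` are connected by a path of `H` all of whose vertices lie in `D`. -/
def ConnectedIn {α : Type} (H : SimpleGraph α) (D : Set α) (x y : α) : Prop :=
  ∃ p : H.Walk x y, ∀ z ∈ p.support, z ∈ D

end ExtendedModel
section Lattice

/-- The graph (ℓ¹) distance on `ℤ^d`. -/
def dist1 {d : ℕ} (u v : Fin d → ℤ) : ℤ := ∑ i, |u i - v i|

lemma dist1_comm {d : ℕ} (u v : Fin d → ℤ) : dist1 u v = dist1 v u :=
  Finset.sum_congr rfl fun _ _ => abs_sub_comm _ _

/-- The ball `Λ(L) = {v ∈ ℤ^d : d(0,v) ≤ L}` (for the graph distance) as a finite set. -/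
def box (d L : ℕ) : Finset (Fin d → ℤ) :=
  (Finset.Icc (fun _ => -(L : ℤ)) (fun _ => (L : ℤ))).filter fun v => dist1 v 0 ≤ (L : ℤ)

/-- The nearest-neighbor graph on a finite subset `Λ` of `ℤ^d`. -/
def latG (d : ℕ) (Λ : Finset (Fin d → ℤ)) : SimpleGraph Λ where
  Adj u v := dist1 (u : Fin d → ℤ) (v : Fin d → ℤ) = 1
  symm := ⟨fun u v h => by show dist1 (v : Fin d → ℤ) (u : Fin d → ℤ) = 1; rw [dist1_comm]; exact h⟩
  loopless := ⟨fun u h => by simp [dist1] at h⟩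

instance {d : ℕ} {Λ : Finset (Fin d → ℤ)} : DecidableRel (latG d Λ).Adj :=
  fun u v => decidable_of_iff (dist1 (u : Fin d → ℤ) (v : Fin d → ℤ) = 1) Iff.rfl

/-- The nearest neighbors of a point of `ℤ^d`. -/
def nbrs {d : ℕ} (v : Fin d → ℤ) : Finset (Fin d → ℤ) :=
  (Finset.univ.image fun i : Fin d => Function.update v i (v i + 1)) ∪
    (Finset.univ.image fun i : Fin d => Function.update v i (v i - 1))

/-- The internal vertex boundary `∂_v Λ` of a finite `Λ ⊂ ℤ^d`: points of `Λ` having a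
nearest neighbor outside `Λ`. -/
def vbdry {d : ℕ} (Λ : Finset (Fin d → ℤ)) : Finset (Fin d → ℤ) :=
  Λ.filter fun v => ¬ nbrs v ⊆ Λ

/-- Restriction of a field on `ℤ^d` to `Λ`. -/
def restF {d : ℕ} (Λ : Finset (Fin d → ℤ)) (η : (Fin d → ℤ) → ℝ) : Λ → ℝ := fun v => η ↑v

/-- A subset `A ⊆ ℤ^d` viewed inside `Λ`. -/
def inΛ {d : ℕ} (Λ A : Finset (Fin d → ℤ)) : Finset Λ :=
  Finset.univ.filter fun v => (v : Fin d → ℤ) ∈ A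

/-- Thermal expectation of `f` in volume `Λ` with the spins on `A` frozen to the constant
value `τ`, at field realization `η`. -/
def thermalL (d : ℕ) (Λ : Finset (Fin d → ℤ)) (J h ε β : ℝ) (η : (Fin d → ℤ) → ℝ)
    (A : Finset (Fin d → ℤ)) (τ : Spin) (f : (Λ → Spin) → ℝ) : ℝ :=
  thermalG (latG d Λ) J h ε β (restF Λ η) (inΛ Λ A) (fun _ => τ) f

/-- The i.i.d. standard Gaussian field on `Λ` (extended by `0` off `Λ`),
as a measure on fields on `ℤ^d`. -/
def fieldMeasure (d : ℕ) (Λ : Finset (Fin d → ℤ)) : Measure ((Fin d → ℤ) → ℝ) :=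
  (Measure.pi fun _ : Λ => gaussianReal 0 1).map
    fun η v => if hv : v ∈ Λ then η ⟨v, hv⟩ else 0

/-- The spin at the origin, as an observable in volume `Λ`. -/
def obs0 {d : ℕ} (Λ : Finset (Fin d → ℤ)) : (Λ → Spin) → ℝ :=
  fun σ => ∑ v : Λ, if (v : Fin d → ℤ) = 0 then spinR (σ v) else 0

/-- The order parameter
`m(L) = (1/2) 𝔼[⟨σ_0⟩_{Λ(L)}^+ - ⟨σ_0⟩_{Λ(L)}^-]` of the RFIM on `ℤ^d`. -/
def mOrd (d : ℕ) (J h ε β : ℝ) (L : ℕ) : ℝ :=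
  ∫ η, (1/2) *
      (thermalL d (box d L) J h ε β η (vbdry (box d L)) pl (obs0 (box d L)) -
       thermalL d (box d L) J h ε β η (vbdry (box d L)) mn (obs0 (box d L)))
    ∂ fieldMeasure d (box d L)

/-- The disagreement count
`D_{Λ₁,Λ₂}(η) = (1/2) ∑_{v ∈ Λ₁} [⟨σ_v⟩_{Λ₂}^+ - ⟨σ_v⟩_{Λ₂}^-]`. -/
def DL (d : ℕ) (Λ₁ Λ₂ : Finset (Fin d → ℤ)) (J h ε β : ℝ) (η : (Fin d → ℤ) → ℝ) : ℝ :=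
  (1/2) * ∑ v : Λ₂,
    if (v : Fin d → ℤ) ∈ Λ₁ then
      thermalL d Λ₂ J h ε β η (vbdry Λ₂) pl (fun σ => spinR (σ v)) -
      thermalL d Λ₂ J h ε β η (vbdry Λ₂) mn (fun σ => spinR (σ v))
    else 0

/-- The lattice partition function in volume `Λ` with spins constrained to `s₁` on `A₁`
and `s₂` on `A₂`. -/
def Z2L (d : ℕ) (Λ : Finset (Fin d → ℤ)) (J h ε β : ℝ) (η : (Fin d → ℤ) → ℝ)
    (A₁ A₂ : Finset (Fin d → ℤ)) (s₁ s₂ : Spin) : ℝ :=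
  Z2G (latG d Λ) J h ε β (restF Λ η) (inΛ Λ A₁) (inΛ Λ A₂) s₁ s₂

/-- The lattice surface tension `T_{Λ₁,Λ₂}(η)`. -/
def surfT (d : ℕ) (Λ₁ Λ₂ : Finset (Fin d → ℤ)) (J h ε β : ℝ)
    (η : (Fin d → ℤ) → ℝ) : ℝ :=
  β⁻¹ * Real.log
    ((Z2L d Λ₂ J h ε β η (vbdry Λ₁) (vbdry Λ₂) pl pl *
      Z2L d Λ₂ J h ε β η (vbdry Λ₁) (vbdry Λ₂) mn mn) /
     (Z2L d Λ₂ J h ε β η (vbdry Λ₁) (vbdry Λ₂) pl mn *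
      Z2L d Λ₂ J h ε β η (vbdry Λ₁) (vbdry Λ₂) mn pl))

/-- Adding a uniform field of intensity `t` on `Λ`. -/
def shiftF {d : ℕ} (Λ : Finset (Fin d → ℤ)) (t : ℝ) (η : (Fin d → ℤ) → ℝ) :
    (Fin d → ℤ) → ℝ :=
  fun v => if v ∈ Λ then η v + t else η v

end Lattice
section LatticeExtended

/-- Expectation under the product of the all-`τ` and all-`τ'` conditioned extended measures
in volume `Λ ⊂ ℤ^d`, with conditioning on `A`. -/
def extExp2L (d : ℕ) (Λ : Finset (Fin d → ℤ)) (J h ε β : ℝ) (η : (Fin d → ℤ) → ℝ)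
    (A : Finset (Fin d → ℤ)) (τ τ' : Spin)
    (F : (Λ → Spin) → ((latG d Λ).edgeFinset → Mid) →
         (Λ → Spin) → ((latG d Λ).edgeFinset → Mid) → ℝ) : ℝ :=
  extExp2 (latG d Λ) J h ε β (restF Λ η) (inΛ Λ A) (fun _ => τ) (fun _ => τ') F

/-- The annulus `𝒜_{1,2}(ℓ) = Λ(2ℓ) ∖ Λ(ℓ)` in `ℤ²`. -/
def ann (ℓ : ℕ) : Finset (Fin 2 → ℤ) := box 2 (2 * ℓ) \ box 2 ℓ

/-- The inner boundary of the annulus: its vertices with a neighbor in `Λ(ℓ)`. -/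
def innerB (ℓ : ℕ) : Finset (Fin 2 → ℤ) :=
  (ann ℓ).filter fun v => (nbrs v ∩ box 2 ℓ).Nonempty

/-- The outer boundary of the annulus: its vertices with a neighbor outside `Λ(2ℓ)`. -/
def outerB (ℓ : ℕ) : Finset (Fin 2 → ℤ) :=
  (ann ℓ).filter fun v => ¬ nbrs v ⊆ box 2 (2 * ℓ)

/-- The event that the (extended) annulus `𝒜_{1,2}(ℓ)` is crossed by a path of the
disagreement set of length (number of steps) at most `n`. -/
def crossPred (ℓ : ℕ) (n : ℝ)
    (σ : (ann ℓ) → Spin) (κ : (latG 2 (ann ℓ)).edgeFinset → Mid)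
    (σ' : (ann ℓ) → Spin) (κ' : (latG 2 (ann ℓ)).edgeFinset → Mid) : Prop :=
  ∃ (a b : (ann ℓ : Finset (Fin 2 → ℤ))), (a : Fin 2 → ℤ) ∈ innerB ℓ ∧
    (b : Fin 2 → ℤ) ∈ outerB ℓ ∧
    ∃ w : (extGraph (latG 2 (ann ℓ))).Walk (Sum.inl a) (Sum.inl b),
      (∀ z ∈ w.support, z ∈ DisSet σ κ σ' κ') ∧ (w.length : ℝ) ≤ n

/-- The annealed probability that the annulus `𝒜_{1,2}(ℓ)` is crossed by a disagreement
path of length at most `n`, under `plus/minus` boundary conditions on `∂_v 𝒜_{1,2}(ℓ)`. -/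
def crossProb (J h ε β : ℝ) (ℓ : ℕ) (n : ℝ) : ℝ :=
  ∫ η, extExp2L 2 (ann ℓ) J h ε β η (vbdry (ann ℓ)) pl mn
      (fun σ κ σ' κ' => if crossPred ℓ n σ κ σ' κ' then 1 else 0)
    ∂ fieldMeasure 2 (ann ℓ)

end LatticeExtended
section Lasso

/-- An extended vertex of `Λ̄` lies in the (extended) annulus `Λ(8ℓ) ∖ Λ(ℓ)`. -/
def extInAnn (ℓ : ℕ) (Λ : Finset (Fin 2 → ℤ)) :
    (Λ ⊕ (latG 2 Λ).edgeFinset) → Prop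
  | Sum.inl v => (v : Fin 2 → ℤ) ∈ box 2 (8 * ℓ) \ box 2 ℓ
  | Sum.inr e => ∀ u ∈ (e : Sym2 (Λ : Finset (Fin 2 → ℤ))),
      (u : Fin 2 → ℤ) ∈ box 2 (8 * ℓ) \ box 2 ℓ

/-- The lasso event `𝓛(ℓ)`: the union of connected components of the disagreement set in
`Λ̄(25ℓ)` meeting `∂_v Λ(25ℓ)` contains a circuit lying in the annulus `Λ(8ℓ) ∖ Λ(ℓ)`
which surrounds the inner hole (i.e. meets every extended path from `Λ(ℓ)` to
`∂_v Λ(25ℓ)`). -/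
def lassoPred (ℓ : ℕ)
    (σ : (box 2 (25 * ℓ)) → Spin) (κ : (latG 2 (box 2 (25 * ℓ))).edgeFinset → Mid)
    (σ' : (box 2 (25 * ℓ)) → Spin) (κ' : (latG 2 (box 2 (25 * ℓ))).edgeFinset → Mid) :
    Prop :=
  ∃ (x : (box 2 (25 * ℓ) : Finset (Fin 2 → ℤ)) ⊕ (latG 2 (box 2 (25 * ℓ))).edgeFinset)
    (w : (extGraph (latG 2 (box 2 (25 * ℓ)))).Walk x x),
      0 < w.length ∧
      (∀ z ∈ w.support, z ∈ DisSet σ κ σ' κ' ∧ extInAnn ℓ (box 2 (25 * ℓ)) z) ∧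
      (∃ b : (box 2 (25 * ℓ) : Finset (Fin 2 → ℤ)), (b : Fin 2 → ℤ) ∈ vbdry (box 2 (25 * ℓ)) ∧
        ConnectedIn (extGraph (latG 2 (box 2 (25 * ℓ)))) (DisSet σ κ σ' κ') x (Sum.inl b)) ∧
      (∀ (v b : (box 2 (25 * ℓ) : Finset (Fin 2 → ℤ))),
        (v : Fin 2 → ℤ) ∈ box 2 ℓ → (b : Fin 2 → ℤ) ∈ vbdry (box 2 (25 * ℓ)) →
        ∀ q : (extGraph (latG 2 (box 2 (25 * ℓ)))).Walk (Sum.inl v) (Sum.inl b),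
          ∃ z ∈ q.support, z ∈ w.support)

/-- The quenched probability of the lasso event `𝓛(ℓ)` under the plus/minus product of
extended measures in `Λ(25ℓ)` with boundary conditions on `∂_v Λ(25ℓ)`. -/
def lassoExpect (J h ε β : ℝ) (ℓ : ℕ) (η : (Fin 2 → ℤ) → ℝ) : ℝ :=
  extExp2L 2 (box 2 (25 * ℓ)) J h ε β η (vbdry (box 2 (25 * ℓ))) pl mn
    (fun σ κ σ' κ' => if lassoPred ℓ σ κ σ' κ' then 1 else 0)

/-- The annealed probability of the lasso event `𝓛(ℓ)`. -/
def lassoProb (J h ε β : ℝ) (ℓ : ℕ) : ℝ :=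
  ∫ η, lassoExpect J h ε β ℓ η ∂ fieldMeasure 2 (box 2 (25 * ℓ))

end Lasso
section Rectangles

/-- Embedding of `ℤ²` into `ℝ²`. -/
def embL (v : Fin 2 → ℤ) : ℝ × ℝ := ((v 0 : ℝ), (v 1 : ℝ))

/-- Embedding of the extended lattice into `ℝ²`: vertices to lattice points, midpoints of
edges to the midpoints of the corresponding segments. -/
def embEV {Λ : Finset (Fin 2 → ℤ)} :
    (Λ ⊕ (latG 2 Λ).edgeFinset) → ℝ × ℝ
  | Sum.inl v => embL (v : Fin 2 → ℤ)
  | Sum.inr e =>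
      Sym2.lift ⟨fun u w : (Λ : Finset (Fin 2 → ℤ)) =>
          ((1 : ℝ) / 2) • (embL (u : Fin 2 → ℤ) + embL (w : Fin 2 → ℤ)),
        fun a b => by
          show ((1 : ℝ) / 2) • (embL (a : Fin 2 → ℤ) + embL (b : Fin 2 → ℤ)) =
            ((1 : ℝ) / 2) • (embL (b : Fin 2 → ℤ) + embL (a : Fin 2 → ℤ))
          rw [add_comm]⟩ (e : Sym2 (Λ : Finset (Fin 2 → ℤ)))

/-- The union of the connected components of the disagreement set meeting `∂_v Λ`. -/
def bdryComp (Λ : Finset (Fin 2 → ℤ))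
    (σ : Λ → Spin) (κ : (latG 2 Λ).edgeFinset → Mid)
    (σ' : Λ → Spin) (κ' : (latG 2 Λ).edgeFinset → Mid) :
    Set (Λ ⊕ (latG 2 Λ).edgeFinset) :=
  {z | ∃ b : (Λ : Finset (Fin 2 → ℤ)), (b : Fin 2 → ℤ) ∈ vbdry Λ ∧
    ConnectedIn (extGraph (latG 2 Λ)) (DisSet σ κ σ' κ') z (Sum.inl b)}

/-- The polygonal curve in `ℝ²` associated with `𝒞_{∂_v Λ}`: the union of the straight
segments between embedded adjacent extended vertices of `𝒞_{∂_v Λ}`. -/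
def curveSet (Λ : Finset (Fin 2 → ℤ))
    (σ : Λ → Spin) (κ : (latG 2 Λ).edgeFinset → Mid)
    (σ' : Λ → Spin) (κ' : (latG 2 Λ).edgeFinset → Mid) : Set (ℝ × ℝ) :=
  ⋃ (z ∈ bdryComp Λ σ κ σ' κ') (z' ∈ bdryComp Λ σ κ σ' κ')
      (_ : (extGraph (latG 2 Λ)).Adj z z'),
    segment ℝ (embEV z) (embEV z')

/-- A rectangle in `ℝ²` of arbitrary orientation: a corner, a unit direction of the short
side, and the short side length `w` (the long side has length `5w`). -/
structure Rect where
  corner : ℝ × ℝ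
  dir : ℝ × ℝ
  w : ℝ

/-- Rotation of a vector of `ℝ²` by `π/2`. -/
def perp (x : ℝ × ℝ) : ℝ × ℝ := (-x.2, x.1)

/-- The closed rectangle determined by the data of `R`. -/
def Rect.carrier (R : Rect) : Set (ℝ × ℝ) :=
  {x | ∃ s t : ℝ, 0 ≤ s ∧ s ≤ R.w ∧ 0 ≤ t ∧ t ≤ 5 * R.w ∧
    x = R.corner + s • R.dir + t • perp R.dir}

/-- One of the two short sides of `R`. -/
def Rect.sideA (R : Rect) : Set (ℝ × ℝ) :=
  {x | ∃ s : ℝ, 0 ≤ s ∧ s ≤ R.w ∧ x = R.corner + s • R.dir}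

/-- The other short side of `R`. -/
def Rect.sideB (R : Rect) : Set (ℝ × ℝ) :=
  {x | ∃ s : ℝ, 0 ≤ s ∧ s ≤ R.w ∧ x = R.corner + s • R.dir + (5 * R.w) • perp R.dir}

/-- The event `Cross(R)`: the curve associated to `𝒞_{∂_v Λ}` contains a continuous path,
staying in `R`, which connects the two short sides of `R`. -/
def CrossR (Λ : Finset (Fin 2 → ℤ)) (R : Rect)
    (σ : Λ → Spin) (κ : (latG 2 Λ).edgeFinset → Mid)
    (σ' : Λ → Spin) (κ' : (latG 2 Λ).edgeFinset → Mid) : Prop :=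
  ∃ γ : ℝ → ℝ × ℝ, ContinuousOn γ (Set.Icc 0 1) ∧
    (∀ t ∈ Set.Icc (0 : ℝ) 1, γ t ∈ curveSet Λ σ κ σ' κ' ∩ R.carrier) ∧
    γ 0 ∈ R.sideA ∧ γ 1 ∈ R.sideB

/-- A collection of rectangles is well-separated (at scale `ℓ`) if each has unit direction
vector, aspect ratio `1 × 5` with `10 ≤ ℓ(R) ≤ ℓ/160`, lies in the open `ℓ¹`-annulus of radii
`(5/4)ℓ, (7/4)ℓ`, and distinct rectangles are at mutual `ℓ¹` distance at least
`60·max(ℓ(R₁), ℓ(R₂))`. -/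
def WellSeparated (ℓ : ℕ) (ℛ : Finset Rect) : Prop :=
  ∀ R ∈ ℛ, (R.dir.1 ^ 2 + R.dir.2 ^ 2 = 1) ∧
    (10 ≤ R.w ∧ R.w ≤ (ℓ : ℝ) / 160) ∧
    (R.carrier ⊆ {x : ℝ × ℝ | 5 / 4 * (ℓ : ℝ) < |x.1| + |x.2| ∧ |x.1| + |x.2| < 7 / 4 * (ℓ : ℝ)}) ∧
    ∀ R' ∈ ℛ, R ≠ R' → ∀ p ∈ R.carrier, ∀ q ∈ Rect.carrier R',
      60 * max R.w R'.w ≤ |p.1 - q.1| + |p.2 - q.2|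

end Rectangles
section NonAnticipatory

variable {V : Type} [Fintype V] [DecidableEq V]

/-- The extended vertices of `Λ̄`: vertices of `Λ` and midpoints of edges with both
endpoints in `Λ`. -/
def extVerts (G : SimpleGraph V) [DecidableRel G.Adj] (Λ : Finset V) :
    Set (V ⊕ G.edgeFinset) :=
  {z | match z with
    | Sum.inl v => v ∈ Λ
    | Sum.inr e => ∀ u ∈ (e : Sym2 V), u ∈ Λ}

/-- The forward set `S_F` of `S`: extended vertices outside `S` admitting a path of the
extended graph to `∂_v Λ₁` which is disjoint from `S`. -/
def fwdSet (G : SimpleGraph V) [DecidableRel G.Adj] (Λ₁ : Finset V)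
    (S : Set (V ⊕ G.edgeFinset)) : Set (V ⊕ G.edgeFinset) :=
  {u | u ∉ S ∧ ∃ a : V, a ∈ vbdryG G Λ₁ ∧
    ∃ p : (extGraph G).Walk u (Sum.inl a), ∀ z ∈ p.support, z ∉ S}

/-- The backward set `S_B`: the complement of `S_F` in the extended vertex set of `Λ̄₂`. -/
def bwdSet (G : SimpleGraph V) [DecidableRel G.Adj] (Λ₁ Λ₂ : Finset V)
    (S : Set (V ⊕ G.edgeFinset)) : Set (V ⊕ G.edgeFinset) :=
  extVerts G Λ₂ \ fwdSet G Λ₁ S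

/-- `S` is a separating set (between `∂_v Λ₁` and `∂_v Λ₂`). -/
def Separating (G : SimpleGraph V) [DecidableRel G.Adj] (Λ₁ Λ₂ : Finset V)
    (S : Set (V ⊕ G.edgeFinset)) : Prop :=
  (∀ a ∈ vbdryG G Λ₁, Sum.inl a ∈ fwdSet G Λ₁ S) ∧
  (∀ b ∈ vbdryG G Λ₂, Sum.inl b ∈ bwdSet G Λ₁ Λ₂ S)

/-- A random set `𝒮` (a function of the pair of extended configurations) is
non-anticipatory if, for every deterministic `S`, the event `{𝒮 = S}` is determined by
the restriction of the pair of configurations to `S_B`. -/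
def NonAnticipatory (G : SimpleGraph V) [DecidableRel G.Adj] (Λ₁ Λ₂ : Finset V)
    (𝒮 : (V → Spin) → (G.edgeFinset → Mid) → (V → Spin) → (G.edgeFinset → Mid) →
      Set (V ⊕ G.edgeFinset)) : Prop :=
  ∀ (S : Set (V ⊕ G.edgeFinset))
    (σ₁ : V → Spin) (κ₁ : G.edgeFinset → Mid) (σ₁' : V → Spin) (κ₁' : G.edgeFinset → Mid)
    (σ₂ : V → Spin) (κ₂ : G.edgeFinset → Mid) (σ₂' : V → Spin) (κ₂' : G.edgeFinset → Mid),
    (∀ z ∈ bwdSet G Λ₁ Λ₂ S,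
      extConf σ₁ κ₁ z = extConf σ₂ κ₂ z ∧ extConf σ₁' κ₁' z = extConf σ₂' κ₂' z) →
    (𝒮 σ₁ κ₁ σ₁' κ₁' = S ↔ 𝒮 σ₂ κ₂ σ₂' κ₂' = S)

end NonAnticipatory
section Misc

variable {V : Type} [Fintype V] [DecidableEq V]

/-- `𝒞_S`: the union of the connected components of the disagreement set meeting
`{Sum.inl s : s ∈ S}`. -/
def compS (G : SimpleGraph V) [DecidableRel G.Adj] (S : Finset V)
    (σ : V → Spin) (κ : G.edgeFinset → Mid) (σ' : V → Spin) (κ' : G.edgeFinset → Mid) :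
    Set (V ⊕ G.edgeFinset) :=
  {z | ∃ s ∈ S, ConnectedIn (extGraph G) (DisSet σ κ σ' κ') z (Sum.inl s)}

/-- The swap map `R_S^A`: if `𝒞_S` meets `A` it is the identity, and otherwise it
exchanges the two configurations on `𝒞_S`. -/
def Rswap (G : SimpleGraph V) [DecidableRel G.Adj] (A S : Finset V)
    (σ : V → Spin) (κ : G.edgeFinset → Mid) (σ' : V → Spin) (κ' : G.edgeFinset → Mid) :
    ((V → Spin) × (G.edgeFinset → Mid)) × ((V → Spin) × (G.edgeFinset → Mid)) :=
  if ∃ a ∈ A, Sum.inl a ∈ compS G S σ κ σ' κ' then ((σ, κ), (σ', κ'))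
  else
    (((fun v => if Sum.inl v ∈ compS G S σ κ σ' κ' then σ' v else σ v),
      (fun e => if Sum.inr e ∈ compS G S σ κ σ' κ' then κ' e else κ e)),
     ((fun v => if Sum.inl v ∈ compS G S σ κ σ' κ' then σ v else σ' v),
      (fun e => if Sum.inr e ∈ compS G S σ κ σ' κ' then κ e else κ' e)))

/-- The number of vertices of `Λ₁` belonging to `𝒞_{∂_v Λ₂}`, i.e. `|Λ₁ ∩ 𝒞_{∂_v Λ₂}|`. -/
def connCount (Λ₁ Λ₂ : Finset (Fin 2 → ℤ))
    (σ : Λ₂ → Spin) (κ : (latG 2 Λ₂).edgeFinset → Mid)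
    (σ' : Λ₂ → Spin) (κ' : (latG 2 Λ₂).edgeFinset → Mid) : ℝ :=
  ∑ v : (Λ₂ : Finset (Fin 2 → ℤ)),
    if (v : Fin 2 → ℤ) ∈ Λ₁ ∧
        (∃ b : (Λ₂ : Finset (Fin 2 → ℤ)), (b : Fin 2 → ℤ) ∈ vbdry Λ₂ ∧
          ConnectedIn (extGraph (latG 2 Λ₂)) (DisSet σ κ σ' κ') (Sum.inl v) (Sum.inl b))
    then 1 else 0

/-- The standard Gaussian density `φ`. -/
def stdGauss (u : ℝ) : ℝ := (Real.sqrt (2 * Real.pi))⁻¹ * Real.exp (-(u ^ 2 / 2))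

/-- The two-sided standard Gaussian tail `χ(s) = 2 ∫_s^∞ φ(u) du`. -/
def chi (s : ℝ) : ℝ := 2 * ∫ u in Set.Ioi s, stdGauss u

/-- The translate `v + Λ` of a finite subset of `ℤ²`. -/
def trF {d : ℕ} (v : Fin d → ℤ) (Λ : Finset (Fin d → ℤ)) : Finset (Fin d → ℤ) :=
  Λ.image fun x => v + x

end Misc

section Connectivity

theorem ConnectedIn.symm {α : Type} {H : SimpleGraph α} {D : Set α} {x y : α}
    (hxy : ConnectedIn H D x y) : ConnectedIn H D y x := by
  obtain ⟨p, hp⟩ := hxy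
  exact ⟨p.reverse, fun z hz => hp z (by simpa using hz)⟩

theorem ConnectedIn.apply_eq_of_adj {α β : Type} {H : SimpleGraph α} {D : Set α} {x y : α}
    (f : α → β) (hf : ∀ z ∈ D, ∀ z' ∈ D, H.Adj z z' → f z = f z')
    (hxy : ConnectedIn H D x y) : f x = f y := by
  obtain ⟨p, hp⟩ := hxy
  induction p with
  | nil => rfl
  | cons hadj q ih =>
    rw [SimpleGraph.Walk.support_cons, List.forall_mem_cons] at hp
    exact (hf _ hp.1 _ (hp.2 _ q.start_mem_support) hadj).trans (ih hp.2)

end Connectivity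

section Weights

theorem Spin.coe_eq_neg_of_ne {s t : Spin} (hst : (s : ℤ) ≠ t) : (s : ℤ) = -(t : ℤ) := by
  revert s t; decide

theorem mn_ne_pl : mn ≠ pl := by decide

theorem Wgt_ne_zero {J β : ℝ} {a k : ℤ} (hW : Wgt J β a k ≠ 0) : a = k ∨ k = 0 := by
  by_contra! hc
  simp [Wgt, hc.1, hc.2] at hW

theorem coe_eq_or_eq_zero_of_edgeW_ne_zero {V : Type} {J β : ℝ} {σ : V → Spin} {k : ℤ}
    {E : Sym2 V} (hE : edgeW J β σ k E ≠ 0) {u : V} (hu : u ∈ E) : (σ u : ℤ) = k ∨ k = 0 := by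
  induction E using Sym2.ind with
  | _ x y =>
    rcases Sym2.mem_iff.mp hu with rfl | rfl
    exacts [Wgt_ne_zero (left_ne_zero_of_mul hE), Wgt_ne_zero (right_ne_zero_of_mul hE)]

theorem mul_ite_swap {α β γ : Type*} [CommMonoid γ] (f : α → β → γ) {P Q : Prop}
    [Decidable P] [Decidable Q] {a a' : α} {k k' : β}
    (hk : P → ¬Q → k = k') (ha : Q → ¬P → a = a') :
    f (if P then a' else a) (if Q then k' else k) * f (if P then a else a') (if Q then k else k') =
      f a k * f a' k' := by
  by_cases hP : P <;> by_cases hQ : Q <;> simp only [hP, hQ, if_true, if_false]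
  · exact mul_comm _ _
  · rw [hk hP hQ]; exact mul_comm _ _
  · rw [ha hQ hP]; exact mul_comm _ _

theorem edgeW_mul_edgeW_congr {V : Type} {J β : ℝ} {σ₁ σ₂ τ₁ τ₂ : V → Spin} {k₁ k₂ l₁ l₂ : ℤ}
    {E : Sym2 V}
    (hE : ∀ u ∈ E,
      Wgt J β (σ₁ u) k₁ * Wgt J β (σ₂ u) k₂ = Wgt J β (τ₁ u) l₁ * Wgt J β (τ₂ u) l₂) :
    edgeW J β σ₁ k₁ E * edgeW J β σ₂ k₂ E = edgeW J β τ₁ l₁ E * edgeW J β τ₂ l₂ E := by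
  induction E using Sym2.ind with
  | _ x y =>
    simp only [edgeW, Sym2.lift_mk]
    rw [mul_mul_mul_comm, hE x (Sym2.mem_mk_left x y), hE y (Sym2.mem_mk_right x y),
      mul_mul_mul_comm]

variable {V : Type} [Fintype V] {G : SimpleGraph V} [DecidableRel G.Adj]

theorem inl_mem_disSet_iff {σ σ' : V → Spin} {κ κ' : G.edgeFinset → Mid} {v : V} :
    Sum.inl v ∈ DisSet σ κ σ' κ' ↔ σ v ≠ σ' v :=
  (not_congr Subtype.ext_iff).symm

theorem coe_eq_or_eq_zero_of_extWeight_ne_zero {J h ε β : ℝ} {η : V → ℝ}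
    {σ : V → Spin} {κ : G.edgeFinset → Mid} (hw : extWeight G J h ε β η σ κ ≠ 0)
    (e : G.edgeFinset) {u : V} (hu : u ∈ (e : Sym2 V)) : (σ u : ℤ) = κ e ∨ (κ e : ℤ) = 0 :=
  coe_eq_or_eq_zero_of_edgeW_ne_zero
    (Finset.prod_ne_zero_iff.mp (left_ne_zero_of_mul hw) e (Finset.mem_univ e)) hu

/-- On a disagreement midpoint one of `κ e`, `κ' e` is nonzero; for a pair of nonzero weight it
fixes the `σ`-spin of every disagreeing endpoint of `e`. -/
def extSpin (σ : V → Spin) (κ κ' : G.edgeFinset → Mid) : V ⊕ G.edgeFinset → ℤ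
  | Sum.inl v => σ v
  | Sum.inr e => if (κ e : ℤ) = 0 then -(κ' e : ℤ) else κ e

variable {J h ε β : ℝ} {η : V → ℝ} {σ σ' : V → Spin} {κ κ' : G.edgeFinset → Mid}

theorem coe_eq_extSpin_of_mem (hw : extWeight G J h ε β η σ κ ≠ 0)
    (hw' : extWeight G J h ε β η σ' κ' ≠ 0) {u : V} {e : G.edgeFinset} (hu : u ∈ (e : Sym2 V))
    (huD : Sum.inl u ∈ DisSet σ κ σ' κ') (heD : Sum.inr e ∈ DisSet σ κ σ' κ') :
    (σ u : ℤ) = extSpin σ κ κ' (Sum.inr e) := by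
  have hκ : (κ e : ℤ) ≠ κ' e := heD
  simp only [extSpin]
  split_ifs with h0
  · have hσ' : (σ' u : ℤ) = κ' e :=
      (coe_eq_or_eq_zero_of_extWeight_ne_zero hw' e hu).resolve_right
        fun h1 => hκ (h0.trans h1.symm)
    rw [← hσ']
    exact Spin.coe_eq_neg_of_ne huD
  · exact (coe_eq_or_eq_zero_of_extWeight_ne_zero hw e hu).resolve_right h0

theorem eq_of_connectedIn_disSet (hw : extWeight G J h ε β η σ κ ≠ 0)
    (hw' : extWeight G J h ε β η σ' κ' ≠ 0) {a b : V}
    (hab : ConnectedIn (extGraph G) (DisSet σ κ σ' κ') (Sum.inl a) (Sum.inl b)) :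
    σ a = σ b := by
  refine Subtype.ext (hab.apply_eq_of_adj (extSpin σ κ κ') ?_)
  rintro (u | e) hz (u' | e') hz' hadj
  · exact hadj.elim
  · exact coe_eq_extSpin_of_mem hw hw' hadj hz hz'
  · exact (coe_eq_extSpin_of_mem hw hw' hadj hz' hz).symm
  · exact hadj.elim

end Weights

section Swap

variable {V : Type} [Fintype V] {G : SimpleGraph V} [DecidableRel G.Adj]

abbrev ExtCfg (G : SimpleGraph V) [DecidableRel G.Adj] : Type :=
  (V → Spin) × (G.edgeFinset → Mid)

def ExtCfg.piecewise (C : Set (V ⊕ G.edgeFinset)) (y x : ExtCfg G) : ExtCfg G :=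
  (fun v => if Sum.inl v ∈ C then y.1 v else x.1 v,
   fun e => if Sum.inr e ∈ C then y.2 e else x.2 e)

def swapOn (C : Set (V ⊕ G.edgeFinset)) (p : ExtCfg G × ExtCfg G) : ExtCfg G × ExtCfg G :=
  (p.2.piecewise C p.1, p.1.piecewise C p.2)

def pairDisSet (p : ExtCfg G × ExtCfg G) : Set (V ⊕ G.edgeFinset) :=
  DisSet p.1.1 p.1.2 p.2.1 p.2.2

def pairWeight (J h ε β : ℝ) (η : V → ℝ) (p : ExtCfg G × ExtCfg G) : ℝ :=
  extWeight G J h ε β η p.1.1 p.1.2 * extWeight G J h ε β η p.2.1 p.2.2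

theorem extConf_piecewise (C : Set (V ⊕ G.edgeFinset)) (y x : ExtCfg G) (z : V ⊕ G.edgeFinset) :
    extConf (y.piecewise C x).1 (y.piecewise C x).2 z =
      if z ∈ C then extConf y.1 y.2 z else extConf x.1 x.2 z := by
  cases z <;> simp only [extConf, ExtCfg.piecewise] <;> split_ifs <;> rfl

theorem pairDisSet_swapOn (C : Set (V ⊕ G.edgeFinset)) (p : ExtCfg G × ExtCfg G) :
    pairDisSet (swapOn C p) = pairDisSet p := by
  ext z
  simp only [pairDisSet, DisSet, Set.mem_ofPred_eq, swapOn, extConf_piecewise]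
  split_ifs
  exacts [ne_comm, Iff.rfl]

theorem swapOn_swapOn (C : Set (V ⊕ G.edgeFinset)) (p : ExtCfg G × ExtCfg G) :
    swapOn C (swapOn C p) = p := by
  obtain ⟨⟨σ, κ⟩, σ', κ'⟩ := p
  simp only [swapOn, ExtCfg.piecewise, Prod.mk.injEq]
  refine ⟨⟨?_, ?_⟩, ?_, ?_⟩ <;> funext <;> split_ifs <;> rfl

theorem extWeight_mul_extWeight (J h ε β : ℝ) (η : V → ℝ) (σ σ' : V → Spin)
    (κ κ' : G.edgeFinset → Mid) :
    extWeight G J h ε β η σ κ * extWeight G J h ε β η σ' κ' =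
      (∏ e : G.edgeFinset, edgeW J β σ (κ e) e * edgeW J β σ' (κ' e) e) *
        Real.exp (-(β * ∑ v, (h + ε * η v) * (spinR (σ v) + spinR (σ' v)))) := by
  simp only [extWeight, Finset.prod_mul_distrib, mul_add, Finset.sum_add_distrib, neg_add,
    Real.exp_add]
  ring

theorem pairWeight_swapOn (J h ε β : ℝ) (η : V → ℝ) {C : Set (V ⊕ G.edgeFinset)}
    {p : ExtCfg G × ExtCfg G}
    (hC : ∀ z ∈ C, ∀ z', (extGraph G).Adj z z' → z' ∈ pairDisSet p → z' ∈ C) :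
    pairWeight J h ε β η (swapOn C p) = pairWeight J h ε β η p := by
  obtain ⟨⟨σ, κ⟩, σ', κ'⟩ := p
  simp only [pairWeight, swapOn, ExtCfg.piecewise, extWeight_mul_extWeight]
  congr 1
  · refine Finset.prod_congr rfl fun e _ => edgeW_mul_edgeW_congr fun u hu => ?_
    simp only [apply_ite (fun s : Spin => (s : ℤ)), apply_ite (fun m : Mid => (m : ℤ))]
    refine mul_ite_swap _ (fun huC heC => ?_) (fun heC huC => ?_)
    · exact not_not.mp fun heD => heC (hC _ huC _ hu heD)
    · exact not_not.mp fun huD => huC (hC _ heC _ hu huD)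
  · congr 3
    refine Finset.sum_congr rfl fun v _ => ?_
    split_ifs <;> ring

end Swap

section Cluster

variable {V : Type} [Fintype V] {G : SimpleGraph V} [DecidableRel G.Adj]

def pairCluster (A : Finset V) (p : ExtCfg G × ExtCfg G) : Set (V ⊕ G.edgeFinset) :=
  compS G A p.1.1 p.1.2 p.2.1 p.2.2

/- The boundary predicates are reducible so that an `if` on them elaborates with the same
`Decidable` instances as the explicit conditions in `extZ2` and `extExp2`. -/
abbrev Separated (A₁ A₂ : Finset V) (p : ExtCfg G × ExtCfg G) : Prop :=
  ¬ ∃ a ∈ A₁, ∃ b ∈ A₂, ConnectedIn (extGraph G) (pairDisSet p) (Sum.inl a) (Sum.inl b)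

abbrev MixedBdry (A₁ A₂ : Finset V) (p : ExtCfg G × ExtCfg G) : Prop :=
  ((∀ v ∈ A₂, p.1.1 v = pl) ∧ ∀ v ∈ A₁, p.1.1 v = mn) ∧
    ((∀ v ∈ A₂, p.2.1 v = mn) ∧ ∀ v ∈ A₁, p.2.1 v = pl)

abbrev PlusMinusBdry (A : Finset V) (p : ExtCfg G × ExtCfg G) : Prop :=
  (∀ v ∈ A, p.1.1 v = pl) ∧ ∀ v ∈ A, p.2.1 v = mn

def clusterSwap (A : Finset V) (p : ExtCfg G × ExtCfg G) : ExtCfg G × ExtCfg G :=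
  swapOn (pairCluster A p) p

variable {A A₁ A₂ : Finset V} {p : ExtCfg G × ExtCfg G}

theorem mem_pairCluster_of_adj {z z' : V ⊕ G.edgeFinset} (hz : z ∈ pairCluster A p)
    (hadj : (extGraph G).Adj z z') (hz' : z' ∈ pairDisSet p) : z' ∈ pairCluster A p := by
  obtain ⟨s, hs, q, hq⟩ := hz
  refine ⟨s, hs, .cons hadj.symm q, ?_⟩
  rw [SimpleGraph.Walk.support_cons, List.forall_mem_cons]
  exact ⟨hz', hq⟩

theorem inl_mem_pairCluster {v : V} (hv : v ∈ A) (hvD : Sum.inl v ∈ pairDisSet p) :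
    Sum.inl v ∈ pairCluster A p :=
  ⟨v, hv, .nil, by simpa [pairDisSet] using hvD⟩

theorem separated_iff_forall_inl_notMem_pairCluster :
    Separated A₁ A₂ p ↔ ∀ b ∈ A₂, Sum.inl b ∉ pairCluster A₁ p := by
  simp only [Separated, pairCluster, compS, Set.mem_ofPred_eq, not_exists, not_and]
  exact ⟨fun h b hb a ha hba => h a ha b hb hba.symm,
    fun h a ha b hb hab => h b hb a ha hab.symm⟩

theorem pairCluster_swapOn (C : Set (V ⊕ G.edgeFinset)) :
    pairCluster A (swapOn C p) = pairCluster A p := by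
  have hD := pairDisSet_swapOn C p
  simp only [pairDisSet] at hD
  simp only [pairCluster, compS, hD]

theorem clusterSwap_involutive (A : Finset V) : Function.Involutive (clusterSwap (G := G) A) :=
  fun p => by rw [clusterSwap, clusterSwap, pairCluster_swapOn, swapOn_swapOn]

theorem pairWeight_clusterSwap (J h ε β : ℝ) (η : V → ℝ) :
    pairWeight J h ε β η (clusterSwap A p) = pairWeight J h ε β η p :=
  pairWeight_swapOn J h ε β η fun _ hz _ hadj hz' => mem_pairCluster_of_adj hz hadj hz'

theorem mixedBdry_iff_plusMinusBdry_swapOn [DecidableEq V] {C : Set (V ⊕ G.edgeFinset)}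
    (h₁ : ∀ v ∈ A₁, Sum.inl v ∈ C) (h₂ : ∀ v ∈ A₂, Sum.inl v ∉ C) :
    MixedBdry A₁ A₂ p ↔ PlusMinusBdry (A₁ ∪ A₂) (swapOn C p) := by
  have e₁ (f g : V → Spin) (s : Spin) :
      (∀ v ∈ A₁, (if Sum.inl v ∈ C then f v else g v) = s) ↔ ∀ v ∈ A₁, f v = s :=
    forall₂_congr fun v hv => by rw [if_pos (h₁ v hv)]
  have e₂ (f g : V → Spin) (s : Spin) :
      (∀ v ∈ A₂, (if Sum.inl v ∈ C then f v else g v) = s) ↔ ∀ v ∈ A₂, g v = s :=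
    forall₂_congr fun v hv => by rw [if_neg (h₂ v hv)]
  simp only [MixedBdry, PlusMinusBdry, swapOn, ExtCfg.piecewise, Finset.forall_mem_union,
    e₁, e₂]
  tauto

theorem separated_of_mixedBdry {J h ε β : ℝ} {η : V → ℝ} (hw : pairWeight J h ε β η p ≠ 0)
    (hm : MixedBdry A₁ A₂ p) : Separated A₁ A₂ p := by
  rintro ⟨a, ha, b, hb, hab⟩
  have hσ := eq_of_connectedIn_disSet (left_ne_zero_of_mul hw) (right_ne_zero_of_mul hw) hab
  rw [hm.1.2 a ha, hm.1.1 b hb] at hσ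
  exact mn_ne_pl hσ

theorem mixedBdry_iff_of_pairWeight_ne_zero [DecidableEq V] {J h ε β : ℝ} {η : V → ℝ}
    (hw : pairWeight J h ε β η p ≠ 0) :
    MixedBdry A₁ A₂ p ↔
      PlusMinusBdry (A₁ ∪ A₂) (clusterSwap A₁ p) ∧ Separated A₁ A₂ (clusterSwap A₁ p) := by
  have hsep : Separated A₁ A₂ (clusterSwap A₁ p) ↔ Separated A₁ A₂ p := by
    rw [Separated, Separated, clusterSwap, pairDisSet_swapOn]
  rw [hsep, separated_iff_forall_inl_notMem_pairCluster]
  constructor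
  · intro hm
    have h₂ := separated_iff_forall_inl_notMem_pairCluster.mp (separated_of_mixedBdry hw hm)
    have h₁ (v : V) (hv : v ∈ A₁) : Sum.inl v ∈ pairCluster A₁ p := by
      refine inl_mem_pairCluster hv (inl_mem_disSet_iff.mpr ?_)
      rw [hm.1.2 v hv, hm.2.2 v hv]
      exact mn_ne_pl
    exact ⟨(mixedBdry_iff_plusMinusBdry_swapOn h₁ h₂).mp hm, h₂⟩
  · rintro ⟨hc, h₂⟩
    have h₁ (v : V) (hv : v ∈ A₁) : Sum.inl v ∈ pairCluster A₁ p := by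
      refine inl_mem_pairCluster hv ?_
      rw [← pairDisSet_swapOn (pairCluster A₁ p)]
      refine inl_mem_disSet_iff.mpr ?_
      change (clusterSwap A₁ p).1.1 v ≠ (clusterSwap A₁ p).2.1 v
      rw [hc.1 v (Finset.mem_union_left _ hv), hc.2 v (Finset.mem_union_left _ hv)]
      exact mn_ne_pl.symm
    exact (mixedBdry_iff_plusMinusBdry_swapOn h₁ h₂).mpr hc

theorem sum_mixedBdry_eq_sum_separated [DecidableEq V] (J h ε β : ℝ) (η : V → ℝ)
    (A₁ A₂ : Finset V) :
    ∑ p : ExtCfg G × ExtCfg G, (if MixedBdry A₁ A₂ p then pairWeight J h ε β η p else 0) =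
      ∑ p : ExtCfg G × ExtCfg G,
        if PlusMinusBdry (A₁ ∪ A₂) p ∧ Separated A₁ A₂ p then pairWeight J h ε β η p else 0 := by
  refine Fintype.sum_bijective _ (clusterSwap_involutive A₁).bijective _ _ fun p => ?_
  rw [pairWeight_clusterSwap]
  by_cases hw : pairWeight J h ε β η p = 0
  · simp only [hw, ite_self]
  · exact if_congr (mixedBdry_iff_of_pairWeight_ne_zero hw) rfl rfl

end Cluster

section PartitionFunctions

variable {V : Type} [Fintype V] [DecidableEq V] {G : SimpleGraph V} [DecidableRel G.Adj]
  (J h ε β : ℝ) (η : V → ℝ) (A₁ A₂ : Finset V)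

theorem extZ_union_const (s : Spin) :
    extZ G J h ε β η (A₁ ∪ A₂) (fun _ => s) = extZ2 G J h ε β η A₂ A₁ s s := by
  simp only [extZ, extZ2, Finset.forall_mem_union, and_comm]

theorem extZ2_mul_extZ2_eq_sum_mixedBdry :
    extZ2 G J h ε β η A₂ A₁ pl mn * extZ2 G J h ε β η A₂ A₁ mn pl =
      ∑ p : ExtCfg G × ExtCfg G, if MixedBdry A₁ A₂ p then pairWeight J h ε β η p else 0 := by
  simp only [extZ2, Finset.sum_mul]
  simp only [Finset.mul_sum, ite_zero_mul_ite_zero, Fintype.sum_prod_type, MixedBdry, pairWeight]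

end PartitionFunctions

theorem partition_ratio_eq_nonconnection_general
    {V : Type} [Fintype V] [DecidableEq V] (G : SimpleGraph V) [DecidableRel G.Adj]
    (J h ε β : ℝ) (η : V → ℝ)
    (Λ₁ Λ₂ : Finset V) :
    (extZ2 G J h ε β η (vbdryG G Λ₂) (vbdryG G Λ₁) pl mn *
        extZ2 G J h ε β η (vbdryG G Λ₂) (vbdryG G Λ₁) mn pl) /
      (extZ2 G J h ε β η (vbdryG G Λ₂) (vbdryG G Λ₁) pl pl *
        extZ2 G J h ε β η (vbdryG G Λ₂) (vbdryG G Λ₁) mn mn) =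
    extExp2 G J h ε β η (vbdryG G Λ₁ ∪ vbdryG G Λ₂) (fun _ => pl) (fun _ => mn)
      (fun σ κ σ' κ' =>
        if ¬ ∃ a ∈ vbdryG G Λ₁, ∃ b ∈ vbdryG G Λ₂,
            ConnectedIn (extGraph G) (DisSet σ κ σ' κ') (Sum.inl a) (Sum.inl b)
        then 1 else 0) := by
  rw [extExp2, extZ_union_const, extZ_union_const, extZ2_mul_extZ2_eq_sum_mixedBdry,
    sum_mixedBdry_eq_sum_separated]
  simp only [Fintype.sum_prod_type, PlusMinusBdry, Separated, pairDisSet, pairWeight,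
    ite_zero_mul, ← ite_and, one_mul]
  -- the two sides now differ only in their `Decidable` instances
  congr!

/-- **Exact representation of the surface tension via disagreement percolation**
(Proposition 4.3): for nested finite subgraphs `Λ₁ ⊆ Λ₂` of a finite graph `G` with
disjoint internal vertex boundaries, at `β ∈ (0,∞)` and any field realization `η`,
`(Z̄^{+,-} Z̄^{-,+})/(Z̄^{+,+} Z̄^{-,-})` equals the probability, under the product of the
all-plus and all-minus conditioned extended measures on `∂_v Λ₁ ∪ ∂_v Λ₂`, that
`∂_v Λ₁` is NOT connected to `∂_v Λ₂` through the disagreement set. -/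
theorem partition_ratio_eq_nonconnection
    {V : Type} [Fintype V] [DecidableEq V] (G : SimpleGraph V) [DecidableRel G.Adj]
    (J h ε β : ℝ) (hJ : 0 < J) (hε : 0 < ε) (hβ : 0 < β) (η : V → ℝ)
    (Λ₁ Λ₂ : Finset V) (hsub : Λ₁ ⊆ Λ₂)
    (hdisj : Disjoint (vbdryG G Λ₁) (vbdryG G Λ₂)) :
    (extZ2 G J h ε β η (vbdryG G Λ₂) (vbdryG G Λ₁) pl mn *
        extZ2 G J h ε β η (vbdryG G Λ₂) (vbdryG G Λ₁) mn pl) /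
      (extZ2 G J h ε β η (vbdryG G Λ₂) (vbdryG G Λ₁) pl pl *
        extZ2 G J h ε β η (vbdryG G Λ₂) (vbdryG G Λ₁) mn mn) =
    extExp2 G J h ε β η (vbdryG G Λ₁ ∪ vbdryG G Λ₂) (fun _ => pl) (fun _ => mn)
      (fun σ κ σ' κ' =>
        if ¬ ∃ a ∈ vbdryG G Λ₁, ∃ b ∈ vbdryG G Λ₂,
            ConnectedIn (extGraph G) (DisSet σ κ σ' κ') (Sum.inl a) (Sum.inl b)
        then 1 else 0) :=
  partition_ratio_eq_nonconnection_general G J h ε β η Λ₁ Λ₂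

end RFIM
end
end

section
/- Let (p_j)_{j≥0} be a monotone non-increasing sequence with 0 ≤ p_j ≤ 1 for all j. Then for each γ > 0 and each integer k ≥ 1 there exists a non-negative integer n with (k+1)·p_k^{1/(1+γ)} − 1 ≤ n ≤ k such that for all integers 0 ≤ j ≤ n, p_n ≤ p_j ≤ p_n·((n+1)/(j+1))^{1+γ}. -/
open MeasureTheory ProbabilityTheory Real BigOperators
open scoped Classical

noncomputable section
namespace RFIM

/-! Choose `n ≤ k` maximising `(j + 1)^(1+γ) p_j`. Comparing with `j ≤ n` gives the upper
bound on `p_j`; comparing with `j = k` and using `p_n ≤ 1` gives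
`(k + 1)^(1+γ) p_k ≤ (n + 1)^(1+γ)`, which is the lower bound on `n`. -/

lemma mul_rpow_one_div_le_of_rpow_mul_le {a x y q r : ℝ} (ha : 0 < a) (hx : 0 ≤ x)
    (hy : 0 ≤ y) (hq : 0 ≤ q) (hr : r ≤ 1) (h : x ^ a * q ≤ y ^ a * r) :
    x * q ^ (1 / a) ≤ y := by
  have hxq : 0 ≤ x * q ^ (1 / a) := by positivity
  rw [← Real.rpow_le_rpow_iff hxq hy ha, Real.mul_rpow hx (by positivity), one_div,
    Real.rpow_inv_rpow hq ha.ne']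
  calc x ^ a * q ≤ y ^ a * r := h
    _ ≤ y ^ a := mul_le_of_le_one_right (by positivity) hr

lemma le_mul_div_rpow_of_rpow_mul_le {a x y q r : ℝ} (hx : 0 < x) (hy : 0 ≤ y)
    (h : x ^ a * q ≤ y ^ a * r) : q ≤ r * (y / x) ^ a := by
  have hxa : 0 < x ^ a := Real.rpow_pos_of_pos hx a
  rw [Real.div_rpow hy hx.le, mul_div_assoc', le_div_iff₀ hxa]
  linarith

theorem regular_stretch_of_monotone_sequence_general
    (p : ℕ → ℝ) (hmono : ∀ i j : ℕ, i ≤ j → p j ≤ p i)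
    (hrange : ∀ j : ℕ, 0 ≤ p j ∧ p j ≤ 1)
    (γ : ℝ) (hγ : 0 < γ) (k : ℕ) :
    ∃ n : ℕ, n ≤ k ∧
      ((k : ℝ) + 1) * p k ^ ((1 : ℝ) / (1 + γ)) - 1 ≤ (n : ℝ) ∧
      ∀ j : ℕ, j ≤ n →
        p n ≤ p j ∧ p j ≤ p n * (((n : ℝ) + 1) / ((j : ℝ) + 1)) ^ ((1 : ℝ) + γ) := by
  obtain ⟨n, hn, hmax⟩ := Finset.exists_max_image (Finset.range (k + 1))
    (fun j : ℕ => ((j : ℝ) + 1) ^ ((1 : ℝ) + γ) * p j) ⟨k, Finset.self_mem_range_succ k⟩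
  have hnk : n ≤ k := Nat.lt_succ_iff.mp (Finset.mem_range.mp hn)
  refine ⟨n, hnk, ?_, fun j hj => ⟨hmono j n hj, ?_⟩⟩
  · have := mul_rpow_one_div_le_of_rpow_mul_le (by linarith) (by positivity) (by positivity)
      (hrange k).1 (hrange n).2 (hmax k (Finset.self_mem_range_succ k))
    linarith
  · exact le_mul_div_rpow_of_rpow_mul_le (by positivity) (by positivity)
      (hmax j (Finset.mem_range_succ_iff.mpr (hj.trans hnk)))

/-- **Regular stretches of monotone sequences** (Lemma 6.4): if `(p_j)` is non-increasing
with values in `[0,1]`, then for every `γ > 0` and integer `k ≥ 1` there is an integer `n`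
with `(k+1) p_k^{1/(1+γ)} - 1 ≤ n ≤ k` such that
`p_n ≤ p_j ≤ p_n ((n+1)/(j+1))^{1+γ}` for all `0 ≤ j ≤ n`. -/
theorem regular_stretch_of_monotone_sequence
    (p : ℕ → ℝ) (hmono : ∀ i j : ℕ, i ≤ j → p j ≤ p i)
    (hrange : ∀ j : ℕ, 0 ≤ p j ∧ p j ≤ 1)
    (γ : ℝ) (hγ : 0 < γ) (k : ℕ) (hk : 1 ≤ k) :
    ∃ n : ℕ, n ≤ k ∧
      ((k : ℝ) + 1) * p k ^ ((1 : ℝ) / (1 + γ)) - 1 ≤ (n : ℝ) ∧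
      ∀ j : ℕ, j ≤ n →
        p n ≤ p j ∧ p j ≤ p n * (((n : ℝ) + 1) / ((j : ℝ) + 1)) ^ ((1 : ℝ) + γ) :=
  regular_stretch_of_monotone_sequence_general p hmono hrange γ hγ k
end RFIM
end
end
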